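/- For n ≥ 1 and 1 ≤ p ≤ ∞, the Sobolev space W^n_p([a,b];ℂ) on a compact interval [a,b] is closed under pointwise multiplication; moreover there is a constant C such that ‖fg‖_{n,p} ≤ C‖f‖_{n,p}‖g‖_{n,p} for all f, g ∈ W^n_p([a,b];ℂ), i.e., W^n_p([a,b];ℂ) is a Banach algebra (up to renorming). -/

import Mathlib

open MeasureTheory Set Filter Topology Matrix
open scoped ENNReal NNReal

noncomputable section

/-- Membership in the Sobolev space `W^n_p([a,b]; E)`: for `n = 0` this is `L_p`,
and for `n + 1` the function is absolutely continuous on `[a,b]` (it is the integral of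
its derivative `g`) with derivative in `W^n_p`. -/
def MemW {E : Type*} [NormedAddCommGroup E] [NormedSpace ℝ E] [CompleteSpace E]
    (p : ℝ≥0∞) (a b : ℝ) : ℕ → (ℝ → E) → Prop
  | 0, f => MemLp f p (volume.restrict (Icc a b))
  | n + 1, f => ∃ g : ℝ → E,
      (∀ t ∈ Icc a b, f t = f a + ∫ s in a..t, g s) ∧ MemW p a b n g

/-- The `W^n_p([a,b])` norm: the sum of the `L_p([a,b])` norms of the derivatives of
order `0,…,n` (computed via `iteratedDerivWithin`, which agrees a.e. with the weak
derivatives for Sobolev functions). -/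
def WNorm {E : Type*} [NormedAddCommGroup E] [NormedSpace ℝ E]
    (p : ℝ≥0∞) (a b : ℝ) (n : ℕ) (f : ℝ → E) : ℝ :=
  ∑ k ∈ Finset.range (n + 1),
    (eLpNorm (iteratedDerivWithin k f (Icc a b)) p (volume.restrict (Icc a b))).toReal

/-!
A function in `W^{n+1}_p([a,b])` is the primitive of its derivative, hence absolutely continuous,
and for such primitives the product rule `(fg)' = f'g + fg'` holds. Averaging
`f t = f s + ∫ s..t, f'` over `s ∈ [a,b]` and comparing `L¹` with `Lᵖ` bounds `sup |f|` by the
`W^1_p` norm. By induction on `n`, multiplication is then a bounded bilinear map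
`W^{n+1}_p × W^n_p → W^n_p`: the term `fg` is controlled by `sup |f| · ‖g‖_p`, and the two terms
of `(fg)'` by the induction hypothesis. One more application of the product rule gives the
algebra estimate on `W^{n+1}_p`.
-/

open intervalIntegral

theorem MeasureTheory.IntegrableOn.intervalIntegrable_of_mem_Icc {E : Type*}
    [NormedAddCommGroup E] {a b s t : ℝ} {u : ℝ → E} (hu : IntegrableOn u (Icc a b))
    (hs : s ∈ Icc a b) (ht : t ∈ Icc a b) : IntervalIntegrable u volume s t :=
  (hu.mono_set (uIcc_subset_Icc hs ht)).intervalIntegrable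

theorem ContinuousOn.memLp_of_isCompact {X E : Type*} [TopologicalSpace X] [T2Space X]
    [MeasurableSpace X] [OpensMeasurableSpace X] [NormedAddCommGroup E]
    [SecondCountableTopologyEither X E] {μ : Measure X} [IsFiniteMeasureOnCompacts μ]
    {K : Set X} {f : X → E} (hK : IsCompact K) (hf : ContinuousOn f K) (p : ℝ≥0∞) :
    MemLp f p (μ.restrict K) := by
  have : IsFiniteMeasure (μ.restrict K) := isFiniteMeasure_restrict.2 hK.measure_lt_top.ne
  obtain ⟨C, hC⟩ := hK.exists_bound_of_continuousOn hf
  exact (memLp_top_of_bound (hf.aestronglyMeasurable hK.measurableSet) C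
    ((ae_restrict_iff' hK.measurableSet).2 (Eventually.of_forall hC))).mono_exponent le_top

theorem MeasureTheory.MemLp.eLpNorm_toReal_add_le {α E : Type*} [MeasurableSpace α]
    [NormedAddCommGroup E] {μ : Measure α} {p : ℝ≥0∞} {f g : α → E} (hp : 1 ≤ p)
    (hf : MemLp f p μ) (hg : MemLp g p μ) :
    (eLpNorm (f + g) p μ).toReal ≤ (eLpNorm f p μ).toReal + (eLpNorm g p μ).toReal :=
  ENNReal.toReal_le_add (eLpNorm_add_le hf.1 hg.1 hp) hf.eLpNorm_ne_top hg.eLpNorm_ne_top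

theorem MeasureTheory.MemLp.integral_norm_le {α E : Type*} [MeasurableSpace α]
    [NormedAddCommGroup E] {μ : Measure α} [IsFiniteMeasure μ] {p : ℝ≥0∞} {f : α → E}
    (hp : 1 ≤ p) (hf : MemLp f p μ) :
    ∫ x, ‖f x‖ ∂μ ≤ (μ univ ^ (1 - p.toReal⁻¹)).toReal * (eLpNorm f p μ).toReal := by
  have hexp : 0 ≤ 1 - p.toReal⁻¹ := by
    rw [sub_nonneg, ← ENNReal.toReal_inv]
    exact ENNReal.toReal_le_of_le_ofReal zero_le_one (by simpa using ENNReal.inv_le_one.2 hp)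
  have h := eLpNorm_le_eLpNorm_mul_rpow_measure_univ hp hf.1
  rw [ENNReal.toReal_one, div_one, one_div] at h
  rw [integral_norm_eq_lintegral_enorm hf.1, ← eLpNorm_one_eq_lintegral_enorm, mul_comm,
    ← ENNReal.toReal_mul]
  exact ENNReal.toReal_mono (ENNReal.mul_ne_top hf.eLpNorm_ne_top
    (ENNReal.rpow_ne_top_of_nonneg hexp (measure_ne_top μ univ))) h

theorem MeasureTheory.MemLp.mul_of_norm_le {α 𝕜 : Type*} [MeasurableSpace α] [NormedRing 𝕜]
    {μ : Measure α} {p : ℝ≥0∞} {s : Set α} {φ ψ : α → 𝕜} {M : ℝ} (hs : MeasurableSet s)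
    (hM0 : 0 ≤ M) (hψ : MemLp ψ p (μ.restrict s)) (hφ : AEStronglyMeasurable φ (μ.restrict s))
    (hM : ∀ x ∈ s, ‖φ x‖ ≤ M) :
    MemLp (fun x => φ x * ψ x) p (μ.restrict s) ∧
      (eLpNorm (fun x => φ x * ψ x) p (μ.restrict s)).toReal
        ≤ M * (eLpNorm ψ p (μ.restrict s)).toReal := by
  have hle : ∀ᵐ x ∂μ.restrict s, ‖φ x * ψ x‖ ≤ M * ‖ψ x‖ := by
    filter_upwards [ae_restrict_mem hs] with x hx
    exact (norm_mul_le _ _).trans (mul_le_mul_of_nonneg_right (hM x hx) (norm_nonneg _))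
  refine ⟨hψ.of_le_mul (hφ.mul hψ.1) hle, ?_⟩
  calc (eLpNorm (fun x => φ x * ψ x) p (μ.restrict s)).toReal
      ≤ (ENNReal.ofReal M * eLpNorm ψ p (μ.restrict s)).toReal :=
        ENNReal.toReal_mono (ENNReal.mul_ne_top ENNReal.ofReal_ne_top hψ.eLpNorm_ne_top)
          (eLpNorm_le_mul_eLpNorm_of_ae_le_mul hle p)
    _ = M * (eLpNorm ψ p (μ.restrict s)).toReal := by
        rw [ENNReal.toReal_mul, ENNReal.toReal_ofReal hM0]

theorem IntervalIntegrable.absolutelyContinuousOnInterval_intervalIntegral' {E : Type*}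
    [NormedAddCommGroup E] [NormedSpace ℝ E] [CompleteSpace E] {w : ℝ → E} {a b c : ℝ}
    (h : IntervalIntegrable w volume a b) (hc : c ∈ uIcc a b) :
    AbsolutelyContinuousOnInterval (fun x => ∫ s in c..x, w s) a b := by
  -- `‖∫ x..y, w‖ ≤ |∫ x..y, ‖w‖|`: compare with the real-valued primitive of `‖w‖`.
  refine squeeze_zero' (Eventually.of_forall fun _ => Finset.sum_nonneg fun _ _ => dist_nonneg)
    ?_ (h.norm.absolutelyContinuousOnInterval_intervalIntegral hc)
  rw [eventually_inf_principal]
  refine Eventually.of_forall fun I hI => Finset.sum_le_sum fun i hi => ?_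
  have hint : ∀ x ∈ uIcc a b, IntervalIntegrable w volume c x := fun x hx =>
    h.mono_set (uIcc_subset_uIcc hc hx)
  obtain ⟨hx, hy⟩ := hI.1 i hi
  dsimp only
  rw [dist_eq_norm, dist_eq_norm, integral_interval_sub_left (hint _ hx) (hint _ hy),
    integral_interval_sub_left (hint _ hx).norm (hint _ hy).norm, Real.norm_eq_abs]
  exact norm_integral_le_abs_integral_norm

theorem AbsolutelyContinuousOnInterval.congr {X : Type*} [PseudoMetricSpace X] {f g : ℝ → X}
    {a b : ℝ} (hf : AbsolutelyContinuousOnInterval f a b) (hfg : EqOn f g (uIcc a b)) :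
    AbsolutelyContinuousOnInterval g a b := by
  refine hf.congr' (eventually_inf_principal.2 ?_)
  refine Eventually.of_forall fun I hI => Finset.sum_congr rfl fun i hi => ?_
  rw [hfg (hI.1 i hi).1, hfg (hI.1 i hi).2]

theorem iteratedDerivWithin_congr_set {𝕜 F : Type*} [NontriviallyNormedField 𝕜]
    [NormedAddCommGroup F] [NormedSpace 𝕜 F] {s t : Set 𝕜} {x : 𝕜} (h : s =ᶠ[𝓝 x] t) (n : ℕ)
    (f : 𝕜 → F) : iteratedDerivWithin n f s x = iteratedDerivWithin n f t x := by
  simp only [iteratedDerivWithin, iteratedFDerivWithin_congr_set h]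

theorem Icc_eventuallyEq_Ioo {a b x : ℝ} (hx : x ∈ Ioo a b) : Icc a b =ᶠ[𝓝 x] Ioo a b := by
  filter_upwards [Ioo_mem_nhds hx.1 hx.2] with y hy
  exact propext ⟨fun _ => hy, fun h => Ioo_subset_Icc_self h⟩

theorem ae_restrict_Icc_mem_Ioo (a b : ℝ) : ∀ᵐ x ∂volume.restrict (Icc a b), x ∈ Ioo a b := by
  rw [← Measure.restrict_congr_set Ioo_ae_eq_Icc]
  exact ae_restrict_mem measurableSet_Ioo

def IsPrimitiveOn {E : Type*} [NormedAddCommGroup E] [NormedSpace ℝ E] (f u : ℝ → E)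
    (a b : ℝ) : Prop :=
  ∀ t ∈ Icc a b, f t = f a + ∫ s in a..t, u s

namespace IsPrimitiveOn

variable {E : Type*} [NormedAddCommGroup E] [NormedSpace ℝ E] {a b : ℝ} {f g u v : ℝ → E}

theorem sub_eq (hf : IsPrimitiveOn f u a b) (hu : IntegrableOn u (Icc a b)) {s t : ℝ}
    (hs : s ∈ Icc a b) (ht : t ∈ Icc a b) : f t - f s = ∫ r in s..t, u r := by
  have ha : a ∈ Icc a b := ⟨le_rfl, hs.1.trans hs.2⟩
  rw [hf t ht, hf s hs, add_sub_add_left_eq_sub, integral_interval_sub_left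
    (hu.intervalIntegrable_of_mem_Icc ha ht) (hu.intervalIntegrable_of_mem_Icc ha hs)]

theorem continuousOn (hf : IsPrimitiveOn f u a b) (hab : a ≤ b)
    (hu : IntegrableOn u (Icc a b)) : ContinuousOn f (Icc a b) := by
  have hprim := continuousOn_primitive_interval (μ := volume) (a := a) (b := b)
    (f := u) (by rwa [uIcc_of_le hab])
  rw [uIcc_of_le hab] at hprim
  exact (continuousOn_const.add hprim).congr hf

theorem add (hf : IsPrimitiveOn f u a b) (hg : IsPrimitiveOn g v a b)
    (hu : IntegrableOn u (Icc a b)) (hv : IntegrableOn v (Icc a b)) :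
    IsPrimitiveOn (f + g) (u + v) a b := by
  intro t ht
  have ha : a ∈ Icc a b := ⟨le_rfl, ht.1.trans ht.2⟩
  simp only [Pi.add_apply]
  rw [hf t ht, hg t ht, integral_add (hu.intervalIntegrable_of_mem_Icc ha ht)
    (hv.intervalIntegrable_of_mem_Icc ha ht)]
  abel

theorem hasDerivAt_of_hasDerivAt_integral (hf : IsPrimitiveOn f u a b) {x : ℝ}
    (hx : x ∈ Ioo a b) {d : E} (h : HasDerivAt (fun t => ∫ s in a..t, u s) d x) :
    HasDerivAt f d x := by
  refine (h.const_add (f a)).congr_of_eventuallyEq ?_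
  filter_upwards [Ioo_mem_nhds hx.1 hx.2] with t ht using hf t (Ioo_subset_Icc_self ht)

theorem norm_le (hab : a < b) (hf : IsPrimitiveOn f u a b) (hu : IntegrableOn u (Icc a b))
    {t : ℝ} (ht : t ∈ Icc a b) :
    ‖f t‖ ≤ (b - a)⁻¹ * (∫ s in Icc a b, ‖f s‖) + ∫ s in Icc a b, ‖u s‖ := by
  have hba : 0 < b - a := sub_pos.2 hab
  have hfi : IntegrableOn f (Icc a b) := (hf.continuousOn hab.le hu).integrableOn_Icc
  set U := ∫ s in Icc a b, ‖u s‖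
  have hpt : ∀ s ∈ Icc a b, ‖f t‖ ≤ ‖f s‖ + U := fun s hs => by
    rw [← sub_add_cancel (f t) (f s), hf.sub_eq hu hs ht, add_comm]
    refine norm_add_le_of_le le_rfl (norm_integral_le_integral_norm_uIoc.trans ?_)
    exact setIntegral_mono_set hu.norm (Eventually.of_forall fun _ => norm_nonneg _)
      (uIoc_subset_uIcc.trans (uIcc_subset_Icc hs ht)).eventuallyLE
  have havg : (b - a) * ‖f t‖ ≤ (∫ s in Icc a b, ‖f s‖) + (b - a) * U := by
    have h := setIntegral_mono_on (integrableOn_const measure_Icc_lt_top.ne)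
      (hfi.norm.add (integrableOn_const measure_Icc_lt_top.ne)) measurableSet_Icc hpt
    simp only [Pi.add_apply] at h
    rwa [integral_add hfi.norm (integrableOn_const measure_Icc_lt_top.ne), setIntegral_const,
      setIntegral_const, Real.volume_real_Icc_of_le hab.le, smul_eq_mul, smul_eq_mul] at h
  calc ‖f t‖ = (b - a)⁻¹ * ((b - a) * ‖f t‖) := by field_simp
    _ ≤ (b - a)⁻¹ * ((∫ s in Icc a b, ‖f s‖) + (b - a) * U) := by gcongr
    _ = (b - a)⁻¹ * (∫ s in Icc a b, ‖f s‖) + U := by field_simp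

variable [CompleteSpace E]

theorem ae_hasDerivAt (hf : IsPrimitiveOn f u a b) (hu : IntegrableOn u (Icc a b)) :
    ∀ᵐ x, x ∈ Icc a b → HasDerivAt f (u x) x := by
  rcases le_or_gt a b with hab | hba
  · have hui : IntervalIntegrable u volume a b :=
      hu.intervalIntegrable_of_mem_Icc ⟨le_rfl, hab⟩ ⟨hab, le_rfl⟩
    filter_upwards [hui.ae_hasDerivAt_integral, Ioo_ae_eq_Icc (a := a) (b := b) (μ := volume)]
      with x hx hIoo hxI
    rw [uIcc_of_le hab] at hx
    exact hf.hasDerivAt_of_hasDerivAt_integral (hIoo.mpr hxI) (hx hxI a ⟨le_rfl, hab⟩)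
  · simp [Icc_eq_empty_of_lt hba]

theorem hasDerivAt (hf : IsPrimitiveOn f u a b) (hu : IntegrableOn u (Icc a b))
    (hu' : ContinuousOn u (Icc a b)) {x : ℝ} (hx : x ∈ Ioo a b) : HasDerivAt f (u x) x := by
  have hxI := Ioo_subset_Icc_self hx
  refine hf.hasDerivAt_of_hasDerivAt_integral hx (integral_hasDerivAt_right
    (hu.intervalIntegrable_of_mem_Icc ⟨le_rfl, hxI.1.trans hxI.2⟩ hxI) ?_
    (hu'.continuousAt (Icc_mem_nhds hx.1 hx.2)))
  exact ⟨Ioo a b, Ioo_mem_nhds hx.1 hx.2, (hu.mono_set Ioo_subset_Icc_self).aestronglyMeasurable⟩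

theorem absolutelyContinuousOnInterval (hf : IsPrimitiveOn f u a b) (hab : a ≤ b)
    (hu : IntegrableOn u (Icc a b)) : AbsolutelyContinuousOnInterval f a b := by
  have hui : IntervalIntegrable u volume a b :=
    hu.intervalIntegrable_of_mem_Icc ⟨le_rfl, hab⟩ ⟨hab, le_rfl⟩
  have hprim : AbsolutelyContinuousOnInterval (fun t => f a + ∫ s in a..t, u s) a b := by
    simpa only [AbsolutelyContinuousOnInterval, dist_add_left] using
      hui.absolutelyContinuousOnInterval_intervalIntegral' left_mem_uIcc
  refine hprim.congr fun t ht => (hf t ?_).symm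
  rwa [uIcc_of_le hab] at ht

end IsPrimitiveOn

theorem IsPrimitiveOn.mul {𝕜 : Type*} [RCLike 𝕜] {a b : ℝ} {f g u v : ℝ → 𝕜}
    (hf : IsPrimitiveOn f u a b) (hg : IsPrimitiveOn g v a b) (hab : a ≤ b)
    (hu : IntegrableOn u (Icc a b)) (hv : IntegrableOn v (Icc a b)) :
    IsPrimitiveOn (fun t => f t * g t) (fun t => u t * g t + f t * v t) a b := by
  set w := fun t => u t * g t + f t * v t
  have hw : IntervalIntegrable w volume a b := by
    refine IntegrableOn.intervalIntegrable_of_mem_Icc ?_ ⟨le_rfl, hab⟩ ⟨hab, le_rfl⟩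
    exact (hu.mul_continuousOn (hg.continuousOn hab hv) isCompact_Icc).add
      (hv.continuousOn_mul (hf.continuousOn hab hu) isCompact_Icc)
  -- `H` is absolutely continuous with derivative zero almost everywhere, hence constant.
  set H := fun t => f t * g t - ∫ s in a..t, w s
  have hH : AbsolutelyContinuousOnInterval H a b :=
    ((hf.absolutelyContinuousOnInterval hab hu).fun_smul
      (hg.absolutelyContinuousOnInterval hab hv)).sub
      (hw.absolutelyContinuousOnInterval_intervalIntegral' left_mem_uIcc)
  have hH' : ∀ᵐ x, x ∈ uIcc a b → HasDerivAt H 0 x := by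
    filter_upwards [hf.ae_hasDerivAt hu, hg.ae_hasDerivAt hv, hw.ae_hasDerivAt_integral]
      with x hfx hgx hwx hx
    rw [uIcc_of_le hab] at hwx hx
    have := ((hfx hx).fun_mul (hgx hx)).fun_sub (hwx hx a ⟨le_rfl, hab⟩)
    rwa [sub_self] at this
  obtain ⟨C, hC⟩ := hH.const_of_ae_hasDerivAt_zero hH'
  intro t ht
  show f t * g t = f a * g a + _
  have hHt : H t = H a := by rw [hC t (by rwa [uIcc_of_le hab]), hC a left_mem_uIcc]
  simp only [H, integral_same, sub_zero] at hHt
  rw [← hHt, sub_add_cancel]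

namespace MemW

variable {E : Type*} [NormedAddCommGroup E] [NormedSpace ℝ E] [CompleteSpace E]
  {p : ℝ≥0∞} {a b : ℝ} {n : ℕ} {f g : ℝ → E}

theorem succ_iff : MemW p a b (n + 1) f ↔ ∃ u, IsPrimitiveOn f u a b ∧ MemW p a b n u :=
  Iff.rfl

theorem memLp (hab : a ≤ b) (hp : 1 ≤ p) (hf : MemW p a b n f) :
    MemLp f p (volume.restrict (Icc a b)) := by
  induction n generalizing f with
  | zero => exact hf
  | succ n ih =>
    obtain ⟨u, hfu, hu⟩ := succ_iff.1 hf
    exact (hfu.continuousOn hab ((ih hu).integrable hp)).memLp_of_isCompact isCompact_Icc p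

theorem integrableOn (hab : a ≤ b) (hp : 1 ≤ p) (hf : MemW p a b n f) :
    IntegrableOn f (Icc a b) :=
  (hf.memLp hab hp).integrable hp

theorem continuousOn (hab : a ≤ b) (hp : 1 ≤ p) (hf : MemW p a b (n + 1) f) :
    ContinuousOn f (Icc a b) := by
  obtain ⟨u, hfu, hu⟩ := succ_iff.1 hf
  exact hfu.continuousOn hab (hu.integrableOn hab hp)

theorem of_succ (hab : a ≤ b) (hp : 1 ≤ p) (hf : MemW p a b (n + 1) f) : MemW p a b n f := by
  induction n generalizing f with
  | zero => exact hf.memLp hab hp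
  | succ n ih =>
    obtain ⟨u, hfu, hu⟩ := succ_iff.1 hf
    exact ⟨u, hfu, ih hu⟩

theorem add (hab : a ≤ b) (hp : 1 ≤ p) (hf : MemW p a b n f) (hg : MemW p a b n g) :
    MemW p a b n (f + g) := by
  induction n generalizing f g with
  | zero => exact MemLp.add hf hg
  | succ n ih =>
    obtain ⟨u, hfu, hu⟩ := succ_iff.1 hf
    obtain ⟨v, hgv, hv⟩ := succ_iff.1 hg
    exact ⟨u + v, hfu.add hgv (hu.integrableOn hab hp) (hv.integrableOn hab hp), ih hu hv⟩

end MemW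

section WNorm

variable {E : Type*} [NormedAddCommGroup E] [NormedSpace ℝ E]
  {p : ℝ≥0∞} {a b : ℝ} {n : ℕ} {f g u : ℝ → E}

theorem wNorm_nonneg (p : ℝ≥0∞) (a b : ℝ) (n : ℕ) (f : ℝ → E) : 0 ≤ WNorm p a b n f :=
  Finset.sum_nonneg fun _ _ => ENNReal.toReal_nonneg

theorem wNorm_mono {m : ℕ} (hnm : n ≤ m) (f : ℝ → E) : WNorm p a b n f ≤ WNorm p a b m f :=
  Finset.sum_le_sum_of_subset_of_nonneg (Finset.range_subset_range.2 (by omega))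
    fun _ _ _ => ENNReal.toReal_nonneg

theorem wNorm_zero (f : ℝ → E) :
    WNorm p a b 0 f = (eLpNorm f p (volume.restrict (Icc a b))).toReal := by
  simp [WNorm]

theorem eLpNorm_toReal_le_wNorm (f : ℝ → E) :
    (eLpNorm f p (volume.restrict (Icc a b))).toReal ≤ WNorm p a b n f :=
  wNorm_zero (p := p) (a := a) (b := b) f ▸ wNorm_mono (Nat.zero_le n) f

variable [CompleteSpace E]

theorem IsPrimitiveOn.iteratedDerivWithin_succ_ae_eq (hab : a < b) (hp : 1 ≤ p)
    (hf : IsPrimitiveOn f u a b) (hu : MemW p a b n u) {k : ℕ} (hk : k ≤ n) :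
    iteratedDerivWithin (k + 1) f (Icc a b)
      =ᵐ[volume.restrict (Icc a b)] iteratedDerivWithin k u (Icc a b) := by
  have hui := hu.integrableOn hab.le hp
  cases k with
  | zero =>
    filter_upwards [ae_restrict_of_ae (hf.ae_hasDerivAt hui), ae_restrict_mem measurableSet_Icc]
      with x hx hxI
    rw [iteratedDerivWithin_one, iteratedDerivWithin_zero]
    exact (hx hxI).hasDerivWithinAt.derivWithin (uniqueDiffOn_Icc hab x hxI)
  | succ k =>
    -- Now `u ∈ W^1_p` is continuous, so `f' = u` holds on all of `(a, b)`, not just a.e.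
    obtain ⟨m, rfl⟩ : ∃ m, n = m + 1 := ⟨n - 1, by omega⟩
    have hderiv : EqOn (derivWithin f (Ioo a b)) u (Ioo a b) := fun x hx =>
      (hf.hasDerivAt hui (hu.continuousOn hab.le hp) hx).hasDerivWithinAt.derivWithin
        (isOpen_Ioo.uniqueDiffWithinAt hx)
    filter_upwards [ae_restrict_Icc_mem_Ioo a b] with x hx
    rw [iteratedDerivWithin_congr_set (Icc_eventuallyEq_Ioo hx),
      iteratedDerivWithin_congr_set (Icc_eventuallyEq_Ioo hx), iteratedDerivWithin_succ']
    exact iteratedDerivWithin_congr hderiv hx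

theorem IsPrimitiveOn.wNorm_succ (hab : a < b) (hp : 1 ≤ p) (hf : IsPrimitiveOn f u a b)
    (hu : MemW p a b n u) :
    WNorm p a b (n + 1) f
      = (eLpNorm f p (volume.restrict (Icc a b))).toReal + WNorm p a b n u := by
  rw [WNorm, Finset.sum_range_succ', iteratedDerivWithin_zero, add_comm]
  congr 1
  refine Finset.sum_congr rfl fun k hk => ?_
  rw [eLpNorm_congr_ae (hf.iteratedDerivWithin_succ_ae_eq hab hp hu
    (Nat.lt_succ_iff.1 (Finset.mem_range.1 hk)))]

theorem IsPrimitiveOn.wNorm_le_wNorm_succ (hab : a < b) (hp : 1 ≤ p)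
    (hf : IsPrimitiveOn f u a b) (hu : MemW p a b n u) :
    WNorm p a b n u ≤ WNorm p a b (n + 1) f := by
  rw [hf.wNorm_succ hab hp hu]
  exact le_add_of_nonneg_left ENNReal.toReal_nonneg

theorem wNorm_add_le (hab : a < b) (hp : 1 ≤ p) (hf : MemW p a b n f) (hg : MemW p a b n g) :
    WNorm p a b n (f + g) ≤ WNorm p a b n f + WNorm p a b n g := by
  induction n generalizing f g with
  | zero =>
    simpa only [wNorm_zero] using
      (hf.memLp hab.le hp).eLpNorm_toReal_add_le hp (hg.memLp hab.le hp)
  | succ n ih =>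
    obtain ⟨u, hfu, hu⟩ := MemW.succ_iff.1 hf
    obtain ⟨v, hgv, hv⟩ := MemW.succ_iff.1 hg
    have hfg := hfu.add hgv (hu.integrableOn hab.le hp) (hv.integrableOn hab.le hp)
    rw [hfg.wNorm_succ hab hp (hu.add hab.le hp hv), hfu.wNorm_succ hab hp hu,
      hgv.wNorm_succ hab hp hv]
    linarith [ih hu hv, (hf.memLp hab.le hp).eLpNorm_toReal_add_le hp (hg.memLp hab.le hp)]

end WNorm

/-- The constant `K` in `sup_{[a,b]} ‖f‖ ≤ K ‖f‖_{W^1_p}`: the factor `(b - a)⁻¹` comes from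
averaging over `[a,b]`, the factor `|[a,b]|^{1 - 1/p}` from Hölder's inequality `‖·‖₁ ≤ ‖·‖_p`. -/
def embeddingConst (p : ℝ≥0∞) (a b : ℝ) : ℝ :=
  ((b - a)⁻¹ + 1) * (volume (Icc a b) ^ (1 - p.toReal⁻¹)).toReal

theorem embeddingConst_pos {p : ℝ≥0∞} {a b : ℝ} (hab : a < b) : 0 < embeddingConst p a b := by
  have hvol : 0 < volume (Icc a b) := by simp [hab]
  have hba : 0 < b - a := sub_pos.2 hab
  exact mul_pos (by positivity)
    (ENNReal.toReal_pos (ENNReal.rpow_pos hvol measure_Icc_lt_top.ne).ne'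
      (ENNReal.rpow_ne_top_of_ne_zero hvol.ne' measure_Icc_lt_top.ne))

theorem MemW.norm_le {E : Type*} [NormedAddCommGroup E] [NormedSpace ℝ E] [CompleteSpace E]
    {p : ℝ≥0∞} {a b : ℝ} {n : ℕ} {f : ℝ → E} (hab : a < b) (hp : 1 ≤ p)
    (hf : MemW p a b (n + 1) f) {t : ℝ} (ht : t ∈ Icc a b) :
    ‖f t‖ ≤ embeddingConst p a b * WNorm p a b (n + 1) f := by
  obtain ⟨u, hfu, hu⟩ := MemW.succ_iff.1 hf
  set J := (volume (Icc a b) ^ (1 - p.toReal⁻¹)).toReal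
  have hL1 : ∀ g : ℝ → E, MemW p a b n g →
      ∫ s in Icc a b, ‖g s‖ ≤ J * (eLpNorm g p (volume.restrict (Icc a b))).toReal :=
    fun g hg => by
      simpa only [Measure.restrict_apply_univ] using (hg.memLp hab.le hp).integral_norm_le hp
  have hinv : 0 ≤ (b - a)⁻¹ := inv_nonneg.2 (sub_pos.2 hab).le
  have hJ : 0 ≤ J := ENNReal.toReal_nonneg
  set X := (eLpNorm f p (volume.restrict (Icc a b))).toReal
  set Y := (eLpNorm u p (volume.restrict (Icc a b))).toReal
  have hX : 0 ≤ X := ENNReal.toReal_nonneg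
  have hY : 0 ≤ Y := ENNReal.toReal_nonneg
  have hYW : Y ≤ WNorm p a b n u := eLpNorm_toReal_le_wNorm u
  calc ‖f t‖ ≤ (b - a)⁻¹ * (∫ s in Icc a b, ‖f s‖) + ∫ s in Icc a b, ‖u s‖ :=
        hfu.norm_le hab (hu.integrableOn hab.le hp) ht
    _ ≤ (b - a)⁻¹ * (J * X) + J * Y := by
        gcongr
        exacts [hL1 f (hf.of_succ hab.le hp), hL1 u hu]
    _ ≤ embeddingConst p a b * (X + WNorm p a b n u) := by
        unfold embeddingConst
        nlinarith [mul_nonneg hinv hJ, mul_nonneg (mul_nonneg hinv hJ) hX,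
          mul_nonneg (mul_nonneg hinv hJ) hY, mul_nonneg hJ hX]
    _ = embeddingConst p a b * WNorm p a b (n + 1) f := by rw [hfu.wNorm_succ hab hp hu]

/-- The induction runs on this bilinear estimate rather than on the algebra estimate, because the
derivative of `f ∈ W^{n+1}_p` only lies in `W^n_p`. -/
def SobolevMulBound (𝕜 : Type*) [RCLike 𝕜] (p : ℝ≥0∞) (a b : ℝ) (n : ℕ) (C : ℝ) : Prop :=
  ∀ f g : ℝ → 𝕜, MemW p a b (n + 1) f → MemW p a b n g →
    MemW p a b n (fun t => f t * g t) ∧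
      WNorm p a b n (fun t => f t * g t) ≤ C * WNorm p a b (n + 1) f * WNorm p a b n g

section Multiplication

variable {𝕜 : Type*} [RCLike 𝕜] {p : ℝ≥0∞} {a b C : ℝ} {n : ℕ} {f g : ℝ → 𝕜}

theorem MemW.mul_memLp (hab : a < b) (hp : 1 ≤ p) (hf : MemW p a b (n + 1) f)
    (hg : MemLp g p (volume.restrict (Icc a b))) :
    MemLp (fun t => f t * g t) p (volume.restrict (Icc a b)) ∧
      (eLpNorm (fun t => f t * g t) p (volume.restrict (Icc a b))).toReal
        ≤ embeddingConst p a b * WNorm p a b (n + 1) f *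
          (eLpNorm g p (volume.restrict (Icc a b))).toReal :=
  hg.mul_of_norm_le measurableSet_Icc
    (mul_nonneg (embeddingConst_pos hab).le (wNorm_nonneg _ _ _ _ _))
    ((hf.continuousOn hab.le hp).aestronglyMeasurable measurableSet_Icc)
    fun _ ht => hf.norm_le hab hp ht

theorem sobolevMulBound_zero (hab : a < b) (hp : 1 ≤ p) :
    SobolevMulBound 𝕜 p a b 0 (embeddingConst p a b) := fun _ _ hf hg => by
  rw [wNorm_zero, wNorm_zero]
  exact hf.mul_memLp hab hp hg

namespace SobolevMulBound

theorem mul (hab : a < b) (hp : 1 ≤ p) (hC0 : 0 ≤ C) (hC : SobolevMulBound 𝕜 p a b n C)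
    (hf : MemW p a b (n + 1) f) (hg : MemW p a b (n + 1) g) :
    MemW p a b (n + 1) (fun t => f t * g t) ∧
      WNorm p a b (n + 1) (fun t => f t * g t)
        ≤ (embeddingConst p a b + 2 * C) * WNorm p a b (n + 1) f * WNorm p a b (n + 1) g := by
  obtain ⟨u, hfu, hu⟩ := MemW.succ_iff.1 hf
  obtain ⟨v, hgv, hv⟩ := MemW.succ_iff.1 hg
  obtain ⟨hgu, hgu_le⟩ := hC g u hg hu
  obtain ⟨hfv, hfv_le⟩ := hC f v hf hv
  have hfg := hfu.mul hgv hab.le (hu.integrableOn hab.le hp) (hv.integrableOn hab.le hp)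
  have hderiv : (fun t => u t * g t + f t * v t) = (fun t => g t * u t) + fun t => f t * v t := by
    ext t
    simp only [Pi.add_apply, mul_comm]
  rw [hderiv] at hfg
  have hmem := hgu.add hab.le hp hfv
  refine ⟨MemW.succ_iff.2 ⟨_, hfg, hmem⟩, ?_⟩
  have hK := (embeddingConst_pos (p := p) hab).le
  have hg_le := eLpNorm_toReal_le_wNorm (p := p) (a := a) (b := b) (n := n + 1) g
  have hu_le := hfu.wNorm_le_wNorm_succ hab hp hu
  have hv_le := hgv.wNorm_le_wNorm_succ hab hp hv
  have hWf := wNorm_nonneg p a b (n + 1) f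
  have hWg := wNorm_nonneg p a b (n + 1) g
  rw [hfg.wNorm_succ hab hp hmem]
  calc _ ≤ embeddingConst p a b * WNorm p a b (n + 1) f *
          (eLpNorm g p (volume.restrict (Icc a b))).toReal +
        (C * WNorm p a b (n + 1) g * WNorm p a b n u +
          C * WNorm p a b (n + 1) f * WNorm p a b n v) :=
        add_le_add (hf.mul_memLp hab hp (hg.memLp hab.le hp)).2
          ((wNorm_add_le hab hp hgu hfv).trans (add_le_add hgu_le hfv_le))
    _ ≤ embeddingConst p a b * WNorm p a b (n + 1) f * WNorm p a b (n + 1) g +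
        (C * WNorm p a b (n + 1) g * WNorm p a b (n + 1) f +
          C * WNorm p a b (n + 1) f * WNorm p a b (n + 1) g) := by
        gcongr
    _ = _ := by ring

theorem succ (hab : a < b) (hp : 1 ≤ p) (hC0 : 0 ≤ C) (hC : SobolevMulBound 𝕜 p a b n C) :
    SobolevMulBound 𝕜 p a b (n + 1) (embeddingConst p a b + 2 * C) := fun f g hf hg => by
  obtain ⟨hmem, hle⟩ := hC.mul hab hp hC0 (hf.of_succ hab.le hp) hg
  refine ⟨hmem, hle.trans ?_⟩
  have := (embeddingConst_pos (p := p) hab).le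
  gcongr
  · exact wNorm_nonneg _ _ _ _ _
  · exact wNorm_mono (Nat.le_succ _) f

end SobolevMulBound

theorem exists_sobolevMulBound (hab : a < b) (hp : 1 ≤ p) (n : ℕ) :
    ∃ C, 0 ≤ C ∧ SobolevMulBound 𝕜 p a b n C := by
  induction n with
  | zero => exact ⟨_, (embeddingConst_pos hab).le, sobolevMulBound_zero hab hp⟩
  | succ n ih =>
    obtain ⟨C, hC0, hC⟩ := ih
    exact ⟨_, add_nonneg (embeddingConst_pos hab).le (by positivity), hC.succ hab hp hC0⟩

end Multiplication

theorem stmt2 (p : ℝ≥0∞) (a b : ℝ) (hab : a < b) (hp : 1 ≤ p) (n : ℕ) (hn : 1 ≤ n) :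
    (∀ f g : ℝ → ℂ, MemW p a b n f → MemW p a b n g →
      MemW p a b n (fun t => f t * g t)) ∧
    ∃ C : ℝ, 0 < C ∧ ∀ f g : ℝ → ℂ, MemW p a b n f → MemW p a b n g →
      WNorm p a b n (fun t => f t * g t) ≤ C * WNorm p a b n f * WNorm p a b n g := by
  obtain ⟨m, rfl⟩ : ∃ m, n = m + 1 := ⟨n - 1, by omega⟩
  obtain ⟨C, hC0, hC⟩ := exists_sobolevMulBound (𝕜 := ℂ) hab hp m
  exact ⟨fun f g hf hg => (hC.mul hab hp hC0 hf hg).1,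
    _, add_pos_of_pos_of_nonneg (embeddingConst_pos hab) (by positivity),
    fun f g hf hg => (hC.mul hab hp hC0 hf hg).2⟩
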